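/- arXiv:2406.13734 — 7 statements merged into one kernel-verified Lean document; each statement's English description precedes it below -/
import Mathlib

section
/- Let G = (V, E, L) be a multiplex network, S : ℕ^L → ℝ_{≥0}^d a non-decreasing summarizer, and k ∈ ℝ_{≥0}^d. If two subsets C, C' ⊆ V both satisfy the (k, S)-degree condition, then their union C ∪ C' also satisfies the (k, S)-degree condition. Consequently, there is a unique maximal subset of V satisfying the (k, S)-degree condition (the union of all subsets satisfying it), i.e., the k-S-core of G exists and is unique. -/
/-!
Degrees can only grow when the vertex set grows, so by monotonicity of `S` every vertex of `C`
keeps its bounds inside any superset of `C`; hence the condition is closed under unions. Since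
`V` is finite, the union of all sets satisfying the condition satisfies it and is the core.
-/

/-- The degree of vertex `v` within the vertex subset `H` in layer `ℓ` of the
multiplex network `G`. -/
def mdeg {V L : Type*} (G : L → SimpleGraph V) [∀ ℓ, DecidableRel (G ℓ).Adj]
    (H : Finset V) (ℓ : L) (v : V) : ℕ :=
  (H.filter fun u => (G ℓ).Adj v u).card

/-- `C` satisfies the `(k, S)`-degree condition: for every `v ∈ C` and every index `i`,
`S(deg^C(v))_i ≥ k_i`. -/
def SatCond {V L ι α : Type*} [Preorder α] (G : L → SimpleGraph V)
    [∀ ℓ, DecidableRel (G ℓ).Adj]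
    (S : (L → ℕ) → ι → α) (k : ι → α) (C : Finset V) : Prop :=
  ∀ v ∈ C, ∀ i, k i ≤ S (fun ℓ => mdeg G C ℓ v) i

section

variable {V L ι α : Type*} [Preorder α] (G : L → SimpleGraph V) [∀ ℓ, DecidableRel (G ℓ).Adj]
  {S : (L → ℕ) → ι → α} {k : ι → α}

lemma mdeg_mono {H H' : Finset V} (h : H ⊆ H') (ℓ : L) (v : V) :
    mdeg G H ℓ v ≤ mdeg G H' ℓ v :=
  Finset.card_le_card (Finset.filter_subset_filter _ h)

lemma SatCond.le_of_subset (hS : Monotone S) {C D : Finset V} (hC : SatCond G S k C)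
    (hCD : C ⊆ D) {v : V} (hv : v ∈ C) (i : ι) : k i ≤ S (fun ℓ => mdeg G D ℓ v) i :=
  (hC v hv i).trans (hS (fun ℓ => mdeg_mono G hCD ℓ v) i)

lemma SatCond.union [DecidableEq V] (hS : Monotone S) {C C' : Finset V}
    (hC : SatCond G S k C) (hC' : SatCond G S k C') : SatCond G S k (C ∪ C') := by
  intro v hv i
  rcases Finset.mem_union.mp hv with hv | hv
  · exact hC.le_of_subset G hS Finset.subset_union_left hv i
  · exact hC'.le_of_subset G hS Finset.subset_union_right hv i

lemma SatCond.finset_sup [DecidableEq V] (hS : Monotone S) {β : Type*} (s : Finset β)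
    (f : β → Finset V) (h : ∀ b ∈ s, SatCond G S k (f b)) : SatCond G S k (s.sup f) :=
  Finset.sup_induction (fun v hv => absurd hv (Finset.notMem_empty v))
    (fun _ h₁ _ h₂ => h₁.union G hS h₂) h

lemma exists_isGreatest_satCond [Fintype V] (hS : Monotone S) :
    ∃ C, IsGreatest {D | SatCond G S k D} C := by
  classical
  exact ⟨(Finset.univ.filter (SatCond G S k)).sup id,
    SatCond.finset_sup G hS _ id fun _ hD => (Finset.mem_filter.mp hD).2,
    fun _ hD => Finset.le_sup (f := id) (Finset.mem_filter.mpr ⟨Finset.mem_univ _, hD⟩)⟩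

end

theorem union_closed_and_core_exists_unique_general
    {V L : Type*} {d : ℕ} [Fintype V] [DecidableEq V]
    (G : L → SimpleGraph V) [∀ ℓ, DecidableRel (G ℓ).Adj]
    (S : (L → ℕ) → Fin d → NNReal) (hS : Monotone S) (k : Fin d → NNReal)
    (C C' : Finset V) (hC : SatCond G S k C) (hC' : SatCond G S k C') :
    SatCond G S k (C ∪ C') ∧
      ∃! Cmax : Finset V, SatCond G S k Cmax ∧ ∀ D : Finset V, SatCond G S k D → D ⊆ Cmax := by
  refine ⟨hC.union G hS hC', ?_⟩
  obtain ⟨Cmax, hCmax⟩ := exists_isGreatest_satCond G (k := k) hS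
  exact ⟨Cmax, hCmax, fun _ hD => IsGreatest.unique (s := {D | SatCond G S k D}) hD hCmax⟩

/-- If two subsets of vertices both satisfy the `(k, S)`-degree condition (for a
non-decreasing summarizer `S`), then so does their union; consequently there is a unique
maximal subset of `V` satisfying the condition, i.e. the `k`-`S`-core exists and is
unique. -/
theorem union_closed_and_core_exists_unique
    {V L : Type*} {d : ℕ} [Fintype V] [DecidableEq V] [Fintype L] [Nonempty L]
    (G : L → SimpleGraph V) [∀ ℓ, DecidableRel (G ℓ).Adj]
    (S : (L → ℕ) → Fin d → NNReal) (hS : Monotone S) (k : Fin d → NNReal)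
    (C C' : Finset V) (hC : SatCond G S k C) (hC' : SatCond G S k C') :
    SatCond G S k (C ∪ C') ∧
      ∃! Cmax : Finset V, SatCond G S k Cmax ∧ ∀ D : Finset V, SatCond G S k D → D ⊆ Cmax :=
  union_closed_and_core_exists_unique_general G S hS k C C' hC hC'
end

section
/- Let G = (V, E, L) be a multiplex network, S : ℕ^L → ℝ_{≥0}^d a non-decreasing summarizer, and let C ⊆ V be a nonempty S-core of G (i.e., C is the k'-S-core for some k' ∈ ℝ_{≥0}^d). Define the vector SCV(C) ∈ ℝ_{≥0}^d by SCV(C)_i = min_{u∈C} S(deg^C(u))_i for 1 ≤ i ≤ d. Then C is the SCV(C)-S-core of G, every SCV index k of C satisfies k_i ≤ SCV(C)_i for all i, and hence SCV(C) is the unique maximal SCV index of C. -/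
/-- `C` is the `k`-`S`-core of `G`; such a `k` is called an SCV index of `C`. -/
def IsSCore {V L ι α : Type*} [Preorder α] (G : L → SimpleGraph V)
    [∀ ℓ, DecidableRel (G ℓ).Adj]
    (S : (L → ℕ) → ι → α) (k : ι → α) (C : Finset V) : Prop :=
  SatCond G S k C ∧ ∀ D : Finset V, SatCond G S k D → D ⊆ C

/-- The vector `SCV(C)` defined by `SCV(C)_i = min_{u ∈ C} S(deg^C(u))_i`. -/
def scvVec {V L : Type*} {d : ℕ} (G : L → SimpleGraph V)
    [∀ ℓ, DecidableRel (G ℓ).Adj]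
    (S : (L → ℕ) → Fin d → NNReal) (C : Finset V) (hne : C.Nonempty) :
    Fin d → NNReal :=
  fun i => C.inf' hne fun u => S (fun ℓ => mdeg G C ℓ u) i

/-- For a nonempty `S`-core `C` of a multiplex network, the vector
`SCV(C)_i = min_{u∈C} S(deg^C(u))_i` is an SCV index of `C`, every SCV index of `C` is
componentwise at most `SCV(C)`, and hence `SCV(C)` is the unique maximal SCV index of
`C` (any SCV index not strictly dominated by another SCV index equals `SCV(C)`). -/
theorem scv_is_unique_maximal_scv_index
    {V L : Type*} {d : ℕ} [Fintype L] [Nonempty L]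
    (G : L → SimpleGraph V) [∀ ℓ, DecidableRel (G ℓ).Adj]
    (S : (L → ℕ) → Fin d → NNReal) (hS : Monotone S)
    (C : Finset V) (hne : C.Nonempty)
    (hC : ∃ k' : Fin d → NNReal, IsSCore G S k' C) :
    IsSCore G S (scvVec G S C hne) C ∧
      (∀ k : Fin d → NNReal, IsSCore G S k C → ∀ i, k i ≤ scvVec G S C hne i) ∧
      ∀ k : Fin d → NNReal, IsSCore G S k C →
        (¬∃ k' : Fin d → NNReal,
            IsSCore G S k' C ∧ (∀ i, k i ≤ k' i) ∧ ∃ j, k j < k' j) →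
        k = scvVec G S C hne := by

  obtain ⟨k', hk'⟩ := hC
  have hle : ∀ k : Fin d → NNReal, SatCond G S k C → ∀ i, k i ≤ scvVec G S C hne i := by
    intro k hk i
    apply Finset.le_inf'
    intro u hu
    exact hk u hu i
  have hsat : SatCond G S (scvVec G S C hne) C := by
    intro v hv i
    exact Finset.inf'_le _ hv
  have hcore : IsSCore G S (scvVec G S C hne) C := by
    refine ⟨hsat, fun D hD => hk'.2 D ?_⟩
    intro v hv i
    exact le_trans (hle k' hk'.1 i) (hD v hv i)
  refine ⟨hcore, fun k hk i => hle k hk.1 i, ?_⟩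
  intro k hk hnot
  by_contra hne'
  apply hnot
  refine ⟨scvVec G S C hne, hcore, fun i => hle k hk.1 i, ?_⟩
  by_contra hj
  push_neg at hj
  exact hne' (funext fun i => le_antisymm (hle k hk.1 i) (hj i))
end

section
/- Let G = (V, E, L) be a multiplex network with V finite, S : ℕ^L → ℝ_{≥0}^d a non-decreasing summarizer, and k ∈ ℝ_{≥0}^d. Consider the peeling process that starts with H = V and, as long as there exists a vertex u ∈ H with S(deg^H(u))_i < k_i for some 1 ≤ i ≤ d, removes one such (arbitrarily chosen) vertex from H. Then the process terminates after at most |V| removals, and regardless of the order in which violating vertices are removed, the final set H equals the k-S-core of G (possibly the empty set). -/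
/-- The peeling process: starting from `H = V` and repeatedly removing an arbitrarily
chosen vertex `u ∈ H` with `S(deg^H(u))_i < k_i` for some `i`, the process terminates
after at most `|V|` removals, and — regardless of the removal order — whenever no
violating vertex remains, the current set equals the `k`-`S`-core of `G`
(possibly the empty set). -/
theorem peeling_terminates_and_computes_sCore
    {V L : Type*} {d : ℕ} [Fintype V] [DecidableEq V] [Fintype L] [Nonempty L]
    (G : L → SimpleGraph V) [∀ ℓ, DecidableRel (G ℓ).Adj]
    (S : (L → ℕ) → Fin d → NNReal) (hS : Monotone S) (k : Fin d → NNReal)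
    (n : ℕ) (f : ℕ → Finset V) (h0 : f 0 = Finset.univ)
    (hstep : ∀ t < n, ∃ u ∈ f t,
      (∃ i, S (fun ℓ => mdeg G (f t) ℓ u) i < k i) ∧ f (t + 1) = (f t).erase u)
    (hterm : ∀ u ∈ f n, ∀ i, k i ≤ S (fun ℓ => mdeg G (f n) ℓ u) i) :
    n ≤ Fintype.card V ∧ IsSCore G S k (f n) := by
  have hmdeg : ∀ (D C : Finset V), D ⊆ C → ∀ ℓ v, mdeg G D ℓ v ≤ mdeg G C ℓ v := by
    intro D C h ℓ v
    exact Finset.card_le_card (Finset.filter_subset_filter _ h)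
  have hcard : ∀ t ≤ n, (f t).card + t ≤ Fintype.card V := by
    intro t
    induction t with
    | zero => intro _; simp [h0]
    | succ t ih =>
      intro ht
      obtain ⟨u, hu, _, heq⟩ := hstep t (lt_of_lt_of_le (Nat.lt_succ_self t) ht)
      have := ih (le_of_lt (lt_of_lt_of_le (Nat.lt_succ_self t) ht))
      have hc : (f (t + 1)).card + 1 = (f t).card := by
        rw [heq]; exact Finset.card_erase_add_one hu
      omega
  have hsub : ∀ D : Finset V, SatCond G S k D → ∀ t ≤ n, D ⊆ f t := by
    intro D hD t
    induction t with
    | zero => intro _; rw [h0]; exact Finset.subset_univ D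
    | succ t ih =>
      intro ht
      have hDt : D ⊆ f t := ih (le_of_lt (lt_of_lt_of_le (Nat.lt_succ_self t) ht))
      obtain ⟨u, hu, ⟨i, hvi⟩, heq⟩ := hstep t (lt_of_lt_of_le (Nat.lt_succ_self t) ht)
      rw [heq]
      intro v hv
      refine Finset.mem_erase.mpr ⟨?_, hDt hv⟩
      rintro rfl
      have h1 : k i ≤ S (fun ℓ => mdeg G D ℓ v) i := hD v hv i
      have h2 : S (fun ℓ => mdeg G D ℓ v) ≤ S (fun ℓ => mdeg G (f t) ℓ v) :=
        hS (fun ℓ => hmdeg D (f t) hDt ℓ v)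
      exact absurd (le_trans h1 (h2 i)) (not_le.mpr hvi)
  refine ⟨?_, hterm, fun D hD => hsub D hD n le_rfl⟩
  have := hcard n le_rfl
  omega
end

section
/- Let G = (V, E, L, w) be a layer-weighted multiplex network, k ∈ ℕ, and λ ∈ ℝ_{≥0}. If two subsets C, C' ⊆ V both satisfy the (k, λ)-WFirmCore condition, then C ∪ C' satisfies it as well. Consequently, there is a unique maximal subset of V satisfying the (k, λ)-WFirmCore condition, i.e., the (k, λ)-WFirmCore of G exists and is unique. -/
/-- `C` satisfies the `(k, λ)`-WFirmCore condition in the layer-weighted multiplex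
network `(G, w)`: every `v ∈ C` admits a set of layers `Sv` with total weight
`Σ_{ℓ∈Sv} w v ℓ ≥ λ` in each of which `v` has degree at least `k` within `C`. -/
def WSat {V L : Type*} (G : L → SimpleGraph V) [∀ ℓ, DecidableRel (G ℓ).Adj]
    (w : V → L → NNReal) (k : ℕ) (lam : NNReal) (C : Finset V) : Prop :=
  ∀ v ∈ C, ∃ Sv : Finset L, lam ≤ ∑ ℓ ∈ Sv, w v ℓ ∧ ∀ ℓ ∈ Sv, k ≤ mdeg G C ℓ v

lemma mdeg_mono_s9 {V L : Type*} [DecidableEq V] (G : L → SimpleGraph V)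
    [∀ ℓ, DecidableRel (G ℓ).Adj] {D E : Finset V} (h : D ⊆ E) (ℓ : L) (v : V) :
    mdeg G D ℓ v ≤ mdeg G E ℓ v :=
  Finset.card_le_card (Finset.filter_subset_filter _ h)

lemma wsat_of_subsets {V L : Type*} [DecidableEq V] (G : L → SimpleGraph V)
    [∀ ℓ, DecidableRel (G ℓ).Adj] (w : V → L → NNReal) (k : ℕ) (lam : NNReal)
    {E : Finset V}
    (h : ∀ v ∈ E, ∃ D : Finset V, WSat G w k lam D ∧ v ∈ D ∧ D ⊆ E) :
    WSat G w k lam E := by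
  intro v hv
  obtain ⟨D, hD, hvD, hDE⟩ := h v hv
  obtain ⟨Sv, hw, hdeg⟩ := hD v hvD
  exact ⟨Sv, hw, fun ℓ hℓ => (hdeg ℓ hℓ).trans (mdeg_mono_s9 G hDE ℓ v)⟩

/-- If two subsets of vertices both satisfy the `(k, λ)`-WFirmCore condition, then so
does their union; consequently there is a unique maximal subset of `V` satisfying the
condition, i.e. the `(k, λ)`-WFirmCore exists and is unique. -/
theorem wfirmCore_union_closed_and_exists_unique
    {V L : Type*} [Fintype V] [DecidableEq V] [Fintype L] [Nonempty L]
    (G : L → SimpleGraph V) [∀ ℓ, DecidableRel (G ℓ).Adj]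
    (w : V → L → NNReal) (k : ℕ) (lam : NNReal)
    (C C' : Finset V) (hC : WSat G w k lam C) (hC' : WSat G w k lam C') :
    WSat G w k lam (C ∪ C') ∧
      ∃! Cmax : Finset V, WSat G w k lam Cmax ∧
        ∀ D : Finset V, WSat G w k lam D → D ⊆ Cmax := by
  classical
  constructor
  · apply wsat_of_subsets
    intro v hv
    rcases Finset.mem_union.mp hv with h | h
    · exact ⟨C, hC, h, Finset.subset_union_left⟩
    · exact ⟨C', hC', h, Finset.subset_union_right⟩
  · refine ⟨Finset.univ.filter (fun v => ∃ D : Finset V, WSat G w k lam D ∧ v ∈ D),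
      ⟨?_, ?_⟩, ?_⟩
    · apply wsat_of_subsets
      intro v hv
      obtain ⟨D, hD, hvD⟩ := (Finset.mem_filter.mp hv).2
      exact ⟨D, hD, hvD, fun u hu => Finset.mem_filter.mpr ⟨Finset.mem_univ _, D, hD, hu⟩⟩
    · intro D hD u hu
      exact Finset.mem_filter.mpr ⟨Finset.mem_univ _, D, hD, hu⟩
    · rintro E ⟨hE, hEmax⟩
      apply Finset.Subset.antisymm
      · intro v hv
        exact Finset.mem_filter.mpr ⟨Finset.mem_univ _, E, hE, hv⟩
      · apply hEmax
        apply wsat_of_subsets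
        intro v hv
        obtain ⟨D, hD, hvD⟩ := (Finset.mem_filter.mp hv).2
        exact ⟨D, hD, hvD, fun u hu => Finset.mem_filter.mpr ⟨Finset.mem_univ _, D, hD, hu⟩⟩
end

section
/- Let G = (V, E, L) be a multiplex network, fix a nonempty subset of layers L̂ ⊆ L and k ∈ ℕ, and define the weight function w by w(v, ℓ) = 1 if ℓ ∈ L̂ and w(v, ℓ) = 0 otherwise, for all v ∈ V. Then the (k, |L̂|)-WFirmCore of (V, E, L, w) equals the CoreCube core of G on L̂ with threshold k, i.e., the maximal subset C ⊆ V such that deg^C_ℓ(v) ≥ k for every v ∈ C and every layer ℓ ∈ L̂. -/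
/-- `C` is the `(k, λ)`-WFirmCore of `(G, w)`. -/
def IsWFirmCore {V L : Type*} (G : L → SimpleGraph V) [∀ ℓ, DecidableRel (G ℓ).Adj]
    (w : V → L → NNReal) (k : ℕ) (lam : NNReal) (C : Finset V) : Prop :=
  WSat G w k lam C ∧ ∀ D : Finset V, WSat G w k lam D → D ⊆ C

/-- `C` is the CoreCube core of `G` on the layer subset `Lhat` with threshold `k`. -/
def IsCoreCube {V L : Type*} (G : L → SimpleGraph V) [∀ ℓ, DecidableRel (G ℓ).Adj]
    (Lhat : Finset L) (k : ℕ) (C : Finset V) : Prop :=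
  (∀ v ∈ C, ∀ ℓ ∈ Lhat, k ≤ mdeg G C ℓ v) ∧
    ∀ D : Finset V, (∀ v ∈ D, ∀ ℓ ∈ Lhat, k ≤ mdeg G D ℓ v) → D ⊆ C

lemma wsat_iff {V L : Type*} [DecidableEq L]
    (G : L → SimpleGraph V) [∀ ℓ, DecidableRel (G ℓ).Adj]
    (Lhat : Finset L) (k : ℕ) (D : Finset V) :
    WSat G (fun _ ℓ => if ℓ ∈ Lhat then (1 : NNReal) else 0) k (Lhat.card : NNReal) D ↔
      (∀ v ∈ D, ∀ ℓ ∈ Lhat, k ≤ mdeg G D ℓ v) := by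
  constructor
  · intro h v hv ℓ hℓ
    obtain ⟨Sv, hsum, hdeg⟩ := h v hv
    have hsum' : (∑ ℓ' ∈ Sv, if ℓ' ∈ Lhat then (1 : NNReal) else 0)
        = ((Sv ∩ Lhat).card : NNReal) := by
      rw [Finset.sum_ite_mem, Finset.sum_const, nsmul_eq_mul, mul_one]
    rw [hsum'] at hsum
    have hcard : Lhat.card ≤ (Sv ∩ Lhat).card := by exact_mod_cast hsum
    have heq : Sv ∩ Lhat = Lhat :=
      Finset.eq_of_subset_of_card_le Finset.inter_subset_right hcard
    have hℓS : ℓ ∈ Sv := Finset.mem_of_mem_inter_left (heq ▸ hℓ)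
    exact hdeg ℓ hℓS
  · intro h v hv
    refine ⟨Lhat, ?_, fun ℓ hℓ => h v hv ℓ hℓ⟩
    rw [Finset.sum_ite_mem, Finset.inter_self, Finset.sum_const, nsmul_eq_mul, mul_one]

/-- For a nonempty subset of layers `L̂ ⊆ L` and the weight function `w(v, ℓ) = 1` if
`ℓ ∈ L̂` and `0` otherwise, the `(k, |L̂|)`-WFirmCore of `(V, E, L, w)` equals the
CoreCube core of `G` on `L̂` with threshold `k`. -/
theorem wfirmCore_indicator_weights_eq_coreCube
    {V L : Type*} [Fintype L] [Nonempty L] [DecidableEq L]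
    (G : L → SimpleGraph V) [∀ ℓ, DecidableRel (G ℓ).Adj]
    (Lhat : Finset L) (hLhat : Lhat.Nonempty) (k : ℕ) (C : Finset V) :
    IsWFirmCore G (fun _ ℓ => if ℓ ∈ Lhat then (1 : NNReal) else 0) k
        (Lhat.card : NNReal) C ↔
      IsCoreCube G Lhat k C := by
  unfold IsWFirmCore IsCoreCube
  simp only [wsat_iff]
end

section
/- Let G = (V, E, L) be a multiplex network with unit layer weights, fix β > 0, let S ⊆ V be nonempty, u ∈ S, and define the marginal density Δ_u(S) = |S|·ρ(S) − (|S|−1)·ρ(S∖{u}) (with ρ(∅) = 0). Let N^S(u) = { v ∈ S∖{u} : v is adjacent to u in at least one layer ℓ ∈ L }. Then Δ_u(S) ≤ max over nonempty L̂ ⊆ L of (min_{ℓ∈L̂} deg^S_ℓ(u)) · |L̂|^β + |L|^β · |N^S(u)|; in particular Δ_u(S) ≤ |L|^β · ( max_{ℓ∈L} deg^S_ℓ(u) + |N^S(u)| ). -/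
/-- The contribution of vertex `u` to the multiplex density of `H`:
`max` over nonempty `L̂ ⊆ L` of `(min_{ℓ∈L̂} deg^H_ℓ(u)) · |L̂|^β`. -/
noncomputable def mscore {V L : Type*} [Fintype L] (G : L → SimpleGraph V)
    [∀ ℓ, DecidableRel (G ℓ).Adj] (β : ℝ) (H : Finset V) (u : V) : ℝ :=
  sSup {x : ℝ | ∃ Lh : Finset L, ∃ h : Lh.Nonempty,
    x = (Lh.inf' h fun ℓ => (mdeg G H ℓ u : ℝ)) * (Lh.card : ℝ) ^ β}

/-- The multiplex density `ρ(S)`, with `ρ(∅) = 0`. -/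
noncomputable def mrho {V L : Type*} [Fintype L] (G : L → SimpleGraph V)
    [∀ ℓ, DecidableRel (G ℓ).Adj] (β : ℝ) (S : Finset V) : ℝ :=
  if S.Nonempty then (S.card : ℝ)⁻¹ * ∑ u ∈ S, mscore G β S u else 0

/-- The multilayer neighborhood of `u` in `S`: the vertices of `S ∖ {u}` adjacent to `u`
in at least one layer. -/
def mnbr {V L : Type*} [Fintype L] [DecidableEq V] (G : L → SimpleGraph V)
    [∀ ℓ, DecidableRel (G ℓ).Adj] (S : Finset V) (u : V) : Finset V :=
  (S.erase u).filter fun v => ∃ ℓ : L, (G ℓ).Adj u v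

section Aux
variable {V L : Type*} [Fintype L] (G : L → SimpleGraph V) [∀ ℓ, DecidableRel (G ℓ).Adj] (β : ℝ)

lemma mscore_bddAbove (H : Finset V) (u : V) :
    BddAbove {x : ℝ | ∃ Lh : Finset L, ∃ h : Lh.Nonempty,
      x = (Lh.inf' h fun ℓ => (mdeg G H ℓ u : ℝ)) * (Lh.card : ℝ) ^ β} := by
  apply Set.Finite.bddAbove
  apply Set.Finite.subset (Set.finite_range fun Lh : Finset L =>
    if h : Lh.Nonempty then (Lh.inf' h fun ℓ => (mdeg G H ℓ u : ℝ)) * (Lh.card : ℝ) ^ β else 0)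
  rintro x ⟨Lh, h, rfl⟩
  exact ⟨Lh, by simp [h]⟩

lemma le_mscore (H : Finset V) (u : V) (Lh : Finset L) (h : Lh.Nonempty) :
    (Lh.inf' h fun ℓ => (mdeg G H ℓ u : ℝ)) * (Lh.card : ℝ) ^ β ≤ mscore G β H u :=
  le_csSup (mscore_bddAbove G β H u) ⟨Lh, h, rfl⟩

lemma mscore_nonneg [Nonempty L] (H : Finset V) (u : V) : 0 ≤ mscore G β H u := by
  refine le_trans ?_ (le_mscore G β H u Finset.univ Finset.univ_nonempty)
  apply mul_nonneg
  · exact Finset.le_inf' _ _ fun ℓ _ => Nat.cast_nonneg _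
  · exact Real.rpow_nonneg (Nat.cast_nonneg _) β

lemma mscore_le [Nonempty L] (hβ : 0 < β) (H : Finset V) (u : V) :
    mscore G β H u ≤ ((Finset.univ.sup fun ℓ => mdeg G H ℓ u : ℕ) : ℝ) * (Fintype.card L : ℝ) ^ β := by
  apply Real.sSup_le
  · rintro x ⟨Lh, h, rfl⟩
    obtain ⟨ℓ₀, hℓ₀, hinf⟩ := Lh.exists_mem_eq_inf' h fun ℓ => (mdeg G H ℓ u : ℝ)
    have h1 : (Lh.inf' h fun ℓ => (mdeg G H ℓ u : ℝ)) ≤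
        ((Finset.univ.sup fun ℓ => mdeg G H ℓ u : ℕ) : ℝ) := by
      rw [hinf]; exact_mod_cast Finset.le_sup (f := fun ℓ => mdeg G H ℓ u) (Finset.mem_univ ℓ₀)
    have h2 : (Lh.card : ℝ) ^ β ≤ (Fintype.card L : ℝ) ^ β := by
      apply Real.rpow_le_rpow (Nat.cast_nonneg _) _ hβ.le
      exact_mod_cast (Finset.card_le_univ Lh).trans_eq Finset.card_univ
    exact mul_le_mul h1 h2 (Real.rpow_nonneg (Nat.cast_nonneg _) β) (Nat.cast_nonneg _)
  · positivity

end Aux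

section Aux2
variable {V L : Type*} [Fintype L] [Nonempty L] [DecidableEq V] (G : L → SimpleGraph V)
  [∀ ℓ, DecidableRel (G ℓ).Adj] (β : ℝ)

lemma mscore_erase (hβ : 0 < β) (S : Finset V) (u v : V) (hv : v ∈ S.erase u) :
    mscore G β S v ≤ mscore G β (S.erase u) v +
      (if v ∈ mnbr G S u then (Fintype.card L : ℝ) ^ β else 0) := by
  have hC : (0:ℝ) ≤ (Fintype.card L : ℝ) ^ β := Real.rpow_nonneg (Nat.cast_nonneg _) β
  apply Real.sSup_le
  · rintro x ⟨Lh, h, rfl⟩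
    by_cases hm : v ∈ mnbr G S u
    · -- deg in S ≤ deg in erase + 1
      have hdeg : ∀ ℓ, (mdeg G S ℓ v : ℝ) ≤ (mdeg G (S.erase u) ℓ v : ℝ) + 1 := by
        intro ℓ
        have : (S.filter fun w => (G ℓ).Adj v w) ⊆
            insert u ((S.erase u).filter fun w => (G ℓ).Adj v w) := by
          intro w hw
          rw [Finset.mem_filter] at hw
          by_cases hwu : w = u
          · simp [hwu]
          · exact Finset.mem_insert_of_mem (Finset.mem_filter.2
              ⟨Finset.mem_erase.2 ⟨hwu, hw.1⟩, hw.2⟩)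
        have := (Finset.card_le_card this).trans (Finset.card_insert_le _ _)
        unfold mdeg
        exact_mod_cast this
      obtain ⟨ℓ₀, hℓ₀, hinf⟩ := Lh.exists_mem_eq_inf' h fun ℓ => (mdeg G (S.erase u) ℓ v : ℝ)
      have h1 : (Lh.inf' h fun ℓ => (mdeg G S ℓ v : ℝ)) ≤
          (Lh.inf' h fun ℓ => (mdeg G (S.erase u) ℓ v : ℝ)) + 1 := by
        refine (Finset.inf'_le _ hℓ₀).trans ?_
        rw [hinf]; exact hdeg ℓ₀
      have hcard : (Lh.card : ℝ) ^ β ≤ (Fintype.card L : ℝ) ^ β := by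
        apply Real.rpow_le_rpow (Nat.cast_nonneg _) _ hβ.le
        exact_mod_cast (Finset.card_le_univ Lh).trans_eq Finset.card_univ
      have hb : (0:ℝ) ≤ (Lh.card : ℝ) ^ β := Real.rpow_nonneg (Nat.cast_nonneg _) β
      calc (Lh.inf' h fun ℓ => (mdeg G S ℓ v : ℝ)) * (Lh.card : ℝ) ^ β
          ≤ ((Lh.inf' h fun ℓ => (mdeg G (S.erase u) ℓ v : ℝ)) + 1) * (Lh.card : ℝ) ^ β :=
            mul_le_mul_of_nonneg_right h1 hb
        _ = (Lh.inf' h fun ℓ => (mdeg G (S.erase u) ℓ v : ℝ)) * (Lh.card : ℝ) ^ β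
              + (Lh.card : ℝ) ^ β := by ring
        _ ≤ mscore G β (S.erase u) v + (Fintype.card L : ℝ) ^ β :=
            add_le_add (le_mscore G β _ v Lh h) hcard
        _ = _ := by rw [if_pos hm]
    · -- degrees equal
      have hadj : ¬ ∃ ℓ : L, (G ℓ).Adj u v := by
        intro hex
        exact hm (Finset.mem_filter.2 ⟨hv, hex⟩)
      have hdeg : ∀ ℓ, mdeg G S ℓ v = mdeg G (S.erase u) ℓ v := by
        intro ℓ
        unfold mdeg
        congr 1
        ext w
        simp only [Finset.mem_filter, Finset.mem_erase]
        constructor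
        · rintro ⟨hwS, hadjw⟩
          refine ⟨⟨?_, hwS⟩, hadjw⟩
          rintro rfl
          exact hadj ⟨ℓ, hadjw.symm⟩
        · rintro ⟨⟨_, hwS⟩, hadjw⟩; exact ⟨hwS, hadjw⟩
      rw [if_neg hm, add_zero]
      refine le_trans (le_of_eq ?_) (le_mscore G β _ v Lh h)
      congr 1
      exact Finset.inf'_congr h rfl fun ℓ _ => by rw [hdeg ℓ]
  · have := mscore_nonneg G β (S.erase u) v
    split_ifs <;> linarith

end Aux2


/-- Upper bound on the marginal density `Δ_u(S) = |S|·ρ(S) − (|S|−1)·ρ(S∖{u})`: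
`Δ_u(S) ≤ max_{∅≠L̂⊆L} (min_{ℓ∈L̂} deg^S_ℓ(u))·|L̂|^β + |L|^β·|N^S(u)|`, and in
particular `Δ_u(S) ≤ |L|^β · (max_{ℓ∈L} deg^S_ℓ(u) + |N^S(u)|)`. -/
theorem marginal_density_upper_bound
    {V L : Type*} [Fintype V] [DecidableEq V] [Fintype L] [Nonempty L]
    (G : L → SimpleGraph V) [∀ ℓ, DecidableRel (G ℓ).Adj]
    (β : ℝ) (hβ : 0 < β) (S : Finset V) (hS : S.Nonempty) (u : V) (hu : u ∈ S) :
    ((S.card : ℝ) * mrho G β S - ((S.card : ℝ) - 1) * mrho G β (S.erase u) ≤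
        mscore G β S u + (Fintype.card L : ℝ) ^ β * ((mnbr G S u).card : ℝ)) ∧
      (S.card : ℝ) * mrho G β S - ((S.card : ℝ) - 1) * mrho G β (S.erase u) ≤
        (Fintype.card L : ℝ) ^ β *
          (((Finset.univ.sup fun ℓ : L => mdeg G S ℓ u : ℕ) : ℝ) +
            ((mnbr G S u).card : ℝ)) := by
  have hC : (0:ℝ) ≤ (Fintype.card L : ℝ) ^ β := Real.rpow_nonneg (Nat.cast_nonneg _) β
  have hcard0 : (S.card : ℝ) ≠ 0 := by
    exact_mod_cast hS.card_pos.ne'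
  have hsum : (S.card : ℝ) * mrho G β S = ∑ v ∈ S, mscore G β S v := by
    rw [mrho, if_pos hS, ← mul_assoc, mul_inv_cancel₀ hcard0, one_mul]
  have hsum2 : ((S.card : ℝ) - 1) * mrho G β (S.erase u) =
      ∑ v ∈ S.erase u, mscore G β (S.erase u) v := by
    rcases (S.erase u).eq_empty_or_nonempty with he | he
    · rw [he, mrho]
      simp
    · rw [mrho, if_pos he]
      have hc : ((S.card : ℝ) - 1) = ((S.erase u).card : ℝ) := by
        rw [Finset.card_erase_of_mem hu]
        have : 1 ≤ S.card := hS.card_pos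
        push_cast [this]
        ring
      have hne : ((S.erase u).card : ℝ) ≠ 0 := by exact_mod_cast he.card_pos.ne'
      rw [hc, ← mul_assoc, mul_inv_cancel₀ hne, one_mul]
  have hsplit : ∑ v ∈ S, mscore G β S v =
      mscore G β S u + ∑ v ∈ S.erase u, mscore G β S v :=
    (Finset.add_sum_erase S _ hu).symm
  have hkey : (S.card : ℝ) * mrho G β S - ((S.card : ℝ) - 1) * mrho G β (S.erase u) ≤
      mscore G β S u + (Fintype.card L : ℝ) ^ β * ((mnbr G S u).card : ℝ) := by
    rw [hsum, hsum2, hsplit]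
    have hstep : ∑ v ∈ S.erase u, mscore G β S v ≤
        ∑ v ∈ S.erase u, (mscore G β (S.erase u) v +
          (if v ∈ mnbr G S u then (Fintype.card L : ℝ) ^ β else 0)) :=
      Finset.sum_le_sum fun v hv => mscore_erase G β hβ S u v hv
    have hind : ∑ v ∈ S.erase u, (if v ∈ mnbr G S u then (Fintype.card L : ℝ) ^ β else 0)
        = (Fintype.card L : ℝ) ^ β * ((mnbr G S u).card : ℝ) := by
      have hsub : mnbr G S u ⊆ S.erase u := by unfold mnbr; exact Finset.filter_subset _ _
      rw [Finset.sum_ite_mem, Finset.inter_eq_right.2 hsub,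
        Finset.sum_const, nsmul_eq_mul, mul_comm]
    rw [Finset.sum_add_distrib, hind] at hstep
    linarith
  refine ⟨hkey, hkey.trans ?_⟩
  have := mscore_le G β hβ S u
  rw [mul_add]
  rw [mul_comm ((Fintype.card L : ℝ) ^ β)]
  linarith
end

section
/- Let G = (V, E, L) be a multiplex network with unit layer weights, fix β > 0, let S ⊆ V be nonempty, and set k = min_{v∈S} min_{ℓ∈L} deg^S_ℓ(v). Then S is contained in the (k, 1)-FirmCore C of G; in particular C is nonempty, and its multiplex density satisfies ρ(C) ≥ k. -/
/-- `C` is the `(k, λ)`-FirmCore of `G`. -/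
def IsFirmCore {V L : Type*} [Fintype L] (G : L → SimpleGraph V)
    [∀ ℓ, DecidableRel (G ℓ).Adj] (k lam : ℕ) (C : Finset V) : Prop :=
  (∀ v ∈ C, lam ≤ (Finset.univ.filter fun ℓ : L => k ≤ mdeg G C ℓ v).card) ∧
    ∀ D : Finset V,
      (∀ v ∈ D, lam ≤ (Finset.univ.filter fun ℓ : L => k ≤ mdeg G D ℓ v).card) → D ⊆ C

/-- For any nonempty `S ⊆ V`, with `k = min_{v∈S} min_{ℓ∈L} deg^S_ℓ(v)`, the set `S` is
contained in the `(k, 1)`-FirmCore `C` of `G`; in particular `C` is nonempty, and its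
multiplex density satisfies `ρ(C) ≥ k`. -/
theorem subset_firmCore_and_density_ge_min_degree
    {V L : Type*} [Fintype V] [Fintype L] [Nonempty L]
    (G : L → SimpleGraph V) [∀ ℓ, DecidableRel (G ℓ).Adj]
    (β : ℝ) (hβ : 0 < β) (S : Finset V) (hS : S.Nonempty) :
    ∃ C : Finset V,
      IsFirmCore G
        (S.inf' hS fun v =>
          Finset.univ.inf' Finset.univ_nonempty fun ℓ : L => mdeg G S ℓ v) 1 C ∧
      S ⊆ C ∧ C.Nonempty ∧
      ((S.inf' hS fun v =>
          Finset.univ.inf' Finset.univ_nonempty fun ℓ : L => mdeg G S ℓ v : ℕ) : ℝ) ≤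
        mrho G β C := by
  classical
  set k := S.inf' hS fun v =>
      Finset.univ.inf' Finset.univ_nonempty fun ℓ : L => mdeg G S ℓ v with hk
  set Good : Finset V → Prop := fun D =>
    ∀ v ∈ D, 1 ≤ (Finset.univ.filter fun ℓ : L => k ≤ mdeg G D ℓ v).card with hGoodDef
  set C : Finset V := Finset.univ.filter (fun v => ∃ D, Good D ∧ v ∈ D) with hCdef
  have hmono : ∀ (D E : Finset V) (ℓ : L) (v : V), D ⊆ E →
      mdeg G D ℓ v ≤ mdeg G E ℓ v := fun D E ℓ v h =>
    Finset.card_le_card (Finset.filter_subset_filter _ h)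
  have hsub : ∀ D, Good D → D ⊆ C := fun D hD v hv =>
    Finset.mem_filter.mpr ⟨Finset.mem_univ _, D, hD, hv⟩
  have hGoodC : Good C := by
    intro v hv
    obtain ⟨-, D, hD, hvD⟩ := Finset.mem_filter.mp hv
    refine le_trans (hD v hvD) (Finset.card_le_card ?_)
    intro ℓ hℓ
    simp only [Finset.mem_filter] at hℓ ⊢
    exact ⟨hℓ.1, hℓ.2.trans (hmono D C ℓ v (hsub D hD))⟩
  have hGoodS : Good S := by
    intro v hv
    have heq : (Finset.univ.filter fun ℓ : L => k ≤ mdeg G S ℓ v) = Finset.univ := by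
      refine Finset.filter_true_of_mem fun ℓ _ => ?_
      calc k ≤ Finset.univ.inf' Finset.univ_nonempty fun ℓ : L => mdeg G S ℓ v :=
            Finset.inf'_le _ hv
        _ ≤ mdeg G S ℓ v := Finset.inf'_le _ (Finset.mem_univ ℓ)
    rw [heq, Finset.card_univ]
    exact Fintype.card_pos
  have hSC : S ⊆ C := hsub S hGoodS
  have hCne : C.Nonempty := hS.mono hSC
  have hscore : ∀ u ∈ C, (k : ℝ) ≤ mscore G β C u := by
    intro u hu
    have h1 := hGoodC u hu
    have hne : (Finset.univ.filter fun ℓ : L => k ≤ mdeg G C ℓ u).Nonempty :=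
      Finset.card_pos.mp h1
    obtain ⟨ℓ, hℓ⟩ := hne
    have hkℓ : k ≤ mdeg G C ℓ u := (Finset.mem_filter.mp hℓ).2
    -- the sSup set is bounded above
    have hbdd : BddAbove {x : ℝ | ∃ Lh : Finset L, ∃ h : Lh.Nonempty,
        x = (Lh.inf' h fun ℓ => (mdeg G C ℓ u : ℝ)) * (Lh.card : ℝ) ^ β} := by
      refine ⟨(Finset.univ.sup' Finset.univ_nonempty fun ℓ : L => (mdeg G C ℓ u : ℝ)) *
        (Fintype.card L : ℝ) ^ β, ?_⟩
      rintro x ⟨Lh, h, rfl⟩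
      obtain ⟨ℓ₀, hℓ₀⟩ := h
      have h1 : (Lh.inf' ⟨ℓ₀, hℓ₀⟩ fun ℓ => (mdeg G C ℓ u : ℝ)) ≤
          Finset.univ.sup' Finset.univ_nonempty fun ℓ : L => (mdeg G C ℓ u : ℝ) :=
        le_trans (Finset.inf'_le _ hℓ₀) (Finset.le_sup' (fun ℓ : L => (mdeg G C ℓ u : ℝ)) (Finset.mem_univ ℓ₀))
      have h2 : (Lh.card : ℝ) ^ β ≤ (Fintype.card L : ℝ) ^ β :=
        Real.rpow_le_rpow (Nat.cast_nonneg _)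
          (Nat.cast_le.mpr (Finset.card_le_card (Finset.subset_univ _))) hβ.le
      have h3 : (0:ℝ) ≤ (Lh.card : ℝ) ^ β := Real.rpow_nonneg (Nat.cast_nonneg _) _
      have h4 : (0:ℝ) ≤
          Finset.univ.sup' Finset.univ_nonempty fun ℓ : L => (mdeg G C ℓ u : ℝ) :=
        le_trans (Nat.cast_nonneg _) (Finset.le_sup' (fun ℓ : L => (mdeg G C ℓ u : ℝ)) (Finset.mem_univ ℓ₀))
      exact mul_le_mul h1 h2 h3 h4
    have hmem : ((mdeg G C ℓ u : ℝ)) ∈ {x : ℝ | ∃ Lh : Finset L, ∃ h : Lh.Nonempty,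
        x = (Lh.inf' h fun ℓ => (mdeg G C ℓ u : ℝ)) * (Lh.card : ℝ) ^ β} := by
      refine ⟨{ℓ}, ⟨ℓ, Finset.mem_singleton_self ℓ⟩, ?_⟩
      simp [Real.one_rpow]
    calc (k : ℝ) ≤ (mdeg G C ℓ u : ℝ) := Nat.cast_le.mpr hkℓ
      _ ≤ mscore G β C u := le_csSup hbdd hmem
  refine ⟨C, ⟨hGoodC, hsub⟩, hSC, hCne, ?_⟩
  rw [mrho, if_pos hCne]
  have hpos : (0:ℝ) < (C.card : ℝ) := by exact_mod_cast Finset.card_pos.mpr hCne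
  rw [le_inv_mul_iff₀ hpos]
  calc (C.card : ℝ) * (k : ℝ) = ∑ _u ∈ C, (k : ℝ) := by
        rw [Finset.sum_const, nsmul_eq_mul]
    _ ≤ ∑ u ∈ C, mscore G β C u := Finset.sum_le_sum hscore
end
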